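/- arXiv:2003.09470 — 7 statements merged into one kernel-verified Lean document; each statement's English description precedes it below -/
import Mathlib

section
/- For integers a, b, k with a, b ≥ 1 and 2 ≤ k ≤ a, the k-rainbow total domination number of K⁺_{a,b} equals 2a. -/
/-!
On the pendant edge `x_i y_i` a `k`-rainbow total dominating function has weight at least `2`
once `k ≥ 2`: if `f y_i = ∅` then `f x_i` holds all `k` colours, and if `f y_i = {j}` then `j`
must also lie in `f x_i`. The `a` pendant edges are disjoint, so the weight is at least `2a`.
Conversely, labelling both `x_i` and `y_i` by `{c i}` for a surjection `c : [a] → [k]` and `B`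
by `∅` has weight `2a`: each vertex of `B` sees every `x_i`, hence every colour.
-/

open SimpleGraph Finset

/-- `f` is a `k`-rainbow dominating function of `G`: every vertex with empty label
sees all colors of `Fin k` among its neighbors' labels. -/
def IsKRDF {V : Type*} (G : SimpleGraph V) (k : ℕ) (f : V → Finset (Fin k)) : Prop :=
  ∀ v, f v = ∅ → ∀ i : Fin k, ∃ u, G.Adj v u ∧ i ∈ f u

/-- `f` is a `k`-rainbow total dominating function of `G`: a `k`RDF such that every
vertex labeled by a singleton `{i}` has a neighbor whose label contains `i`. -/
def IsKRTDF {V : Type*} (G : SimpleGraph V) (k : ℕ) (f : V → Finset (Fin k)) : Prop :=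
  IsKRDF G k f ∧ ∀ v (i : Fin k), f v = {i} → ∃ u, G.Adj v u ∧ i ∈ f u

/-- The `k`-rainbow domination number of `G`. -/
noncomputable def rdnum {V : Type*} [Fintype V] (G : SimpleGraph V) (k : ℕ) : ℕ :=
  sInf {n | ∃ f : V → Finset (Fin k), IsKRDF G k f ∧ ∑ v, (f v).card = n}

/-- The `k`-rainbow total domination number of `G`. -/
noncomputable def rtdnum {V : Type*} [Fintype V] (G : SimpleGraph V) (k : ℕ) : ℕ :=
  sInf {n | ∃ f : V → Finset (Fin k), IsKRTDF G k f ∧ ∑ v, (f v).card = n}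

/-- The domination number of `G`. -/
noncomputable def domnum {V : Type*} [Fintype V] (G : SimpleGraph V) : ℕ :=
  sInf {n | ∃ D : Finset V, (∀ v ∉ D, ∃ u ∈ D, G.Adj u v) ∧ D.card = n}

/-- The total domination number of `G`. -/
noncomputable def totdomnum {V : Type*} [Fintype V] (G : SimpleGraph V) : ℕ :=
  sInf {n | ∃ D : Finset V, (∀ v, ∃ u ∈ D, G.Adj u v) ∧ D.card = n}

/-- The graph `K⁺_{a,b}`: the complete bipartite graph on parts
`x_1,…,x_a` and `B` (`|B| = b`), together with pendant vertices `y_1,…,y_a`,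
where `y_i` is attached to `x_i`. -/
def Kplus (a b : ℕ) : SimpleGraph ((Fin a ⊕ Fin b) ⊕ Fin a) :=
  SimpleGraph.fromRel (fun u v =>
    match u, v with
    | Sum.inl (Sum.inl _), Sum.inl (Sum.inr _) => True
    | Sum.inl (Sum.inl i), Sum.inr j => i = j
    | _, _ => False)

open Function

lemma IsKRTDF.two_le_card_add_card_of_pendant {V : Type*} {G : SimpleGraph V} {k : ℕ}
    {f : V → Finset (Fin k)} (hf : IsKRTDF G k f) (hk : 2 ≤ k) {u v : V}
    (hv : ∀ w, G.Adj v w → w = u) : 2 ≤ (f u).card + (f v).card := by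
  obtain hv0 | hv1 | hv2 : (f v).card = 0 ∨ (f v).card = 1 ∨ 2 ≤ (f v).card := by omega
  · have hu : f u = univ := eq_univ_of_forall fun i => by
      obtain ⟨w, hw, hi⟩ := hf.1 v (card_eq_zero.mp hv0) i
      rwa [hv w hw] at hi
    simp only [hu, card_univ, Fintype.card_fin]
    omega
  · obtain ⟨i, hi⟩ := card_eq_one.mp hv1
    obtain ⟨w, hw, hiw⟩ := hf.2 v i hi
    have : 0 < (f u).card := card_pos.mpr ⟨i, hv w hw ▸ hiw⟩
    omega
  · omega

lemma Fin.exists_surjective_of_le {a k : ℕ} (hk : 0 < k) (hka : k ≤ a) :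
    ∃ c : Fin a → Fin k, Surjective c :=
  have : Nonempty (Fin k) := ⟨⟨0, hk⟩⟩
  ⟨_, invFun_surjective (Fin.castLE_injective hka)⟩

namespace Kplus

variable {a b k : ℕ}

lemma adj_inr_iff (i : Fin a) (u : (Fin a ⊕ Fin b) ⊕ Fin a) :
    (Kplus a b).Adj (.inr i) u ↔ u = .inl (.inl i) := by
  rcases u with ((x | x) | x) <;> simp [Kplus, SimpleGraph.fromRel_adj, eq_comm]

lemma adj_inl_inl_inr (i : Fin a) : (Kplus a b).Adj (.inl (.inl i)) (.inr i) := by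
  simp [Kplus, SimpleGraph.fromRel_adj]

lemma adj_inl_inl_inl_inr (i : Fin a) (j : Fin b) :
    (Kplus a b).Adj (.inl (.inl i)) (.inl (.inr j)) := by
  simp [Kplus, SimpleGraph.fromRel_adj]

def pairLabel (c : Fin a → Fin k) : (Fin a ⊕ Fin b) ⊕ Fin a → Finset (Fin k)
  | .inl (.inl i) => {c i}
  | .inl (.inr _) => ∅
  | .inr i => {c i}

lemma isKRTDF_pairLabel {c : Fin a → Fin k} (hc : Surjective c) :
    IsKRTDF (Kplus a b) k (pairLabel c) := by
  refine ⟨?_, ?_⟩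
  · rintro ((x | j) | y) hv i
    · simp [pairLabel] at hv
    · obtain ⟨x, rfl⟩ := hc i
      exact ⟨.inl (.inl x), (adj_inl_inl_inl_inr x j).symm, mem_singleton_self _⟩
    · simp [pairLabel] at hv
  · rintro ((x | j) | y) i hv
    · exact ⟨.inr x, adj_inl_inl_inr x, hv ▸ mem_singleton_self _⟩
    · simp [pairLabel] at hv
    · exact ⟨.inl (.inl y), (adj_inr_iff y _).mpr rfl, hv ▸ mem_singleton_self _⟩

lemma sum_card_pairLabel (c : Fin a → Fin k) :
    ∑ v, (pairLabel (b := b) c v).card = 2 * a := by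
  simp only [pairLabel, Fintype.sum_sum_type, card_singleton, sum_const, card_univ,
    Fintype.card_fin, smul_eq_mul, mul_one, card_empty]
  omega

lemma two_mul_le_sum_card {f : (Fin a ⊕ Fin b) ⊕ Fin a → Finset (Fin k)}
    (hf : IsKRTDF (Kplus a b) k f) (hk : 2 ≤ k) : 2 * a ≤ ∑ v, (f v).card := by
  have hpendant (i : Fin a) : 2 ≤ (f (.inl (.inl i))).card + (f (.inr i)).card :=
    hf.two_le_card_add_card_of_pendant hk fun w hw => (adj_inr_iff i w).mp hw
  calc 2 * a = ∑ _i : Fin a, 2 := by simp [mul_comm]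
    _ ≤ ∑ i, ((f (.inl (.inl i))).card + (f (.inr i)).card) := sum_le_sum fun i _ => hpendant i
    _ ≤ ∑ v, (f v).card := by
      simp only [Fintype.sum_sum_type, sum_add_distrib]
      omega

end Kplus

theorem rtdnum_Kplus_general (a b k : ℕ) (hk2 : 2 ≤ k) (hka : k ≤ a) :
    rtdnum (Kplus a b) k = 2 * a := by
  obtain ⟨c, hc⟩ := Fin.exists_surjective_of_le (by omega) hka
  refine IsLeast.csInf_eq ⟨⟨Kplus.pairLabel c, Kplus.isKRTDF_pairLabel hc,
    Kplus.sum_card_pairLabel c⟩, ?_⟩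
  rintro _ ⟨f, hf, rfl⟩
  exact Kplus.two_mul_le_sum_card hf hk2

theorem rtdnum_Kplus (a b k : ℕ) (ha : 1 ≤ a) (hb : 1 ≤ b) (hk2 : 2 ≤ k) (hka : k ≤ a) :
    rtdnum (Kplus a b) k = 2 * a :=
  rtdnum_Kplus_general a b k hk2 hka
end

section
/- Let a ≤ b be positive integers and k ≥ 1 with a + b > k and a ≥ 2k. Then the k-rainbow domination number of K_{a,b} equals 2k. -/
open SimpleGraph Finset

/-!
Labelling one vertex on each side by all of `[k]` gives weight `2k`. Conversely, if every label on
one side is nonempty, the weight is at least the size of that side; otherwise both sides contain a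
vertex with empty label, so each side has to carry all `k` colours for the other.
-/

variable {V α β : Type*} {k : ℕ}

lemma card_le_sum_card_of_forall_exists_mem [Fintype α] (g : α → Finset (Fin k))
    (h : ∀ c, ∃ u, c ∈ g u) : k ≤ ∑ u, (g u).card :=
  calc k = (univ : Finset (Fin k)).card := (card_fin k).symm
    _ ≤ (univ.biUnion g).card := card_le_card fun c _ ↦
        let ⟨u, hu⟩ := h c; mem_biUnion.2 ⟨u, mem_univ u, hu⟩
    _ ≤ ∑ u, (g u).card := card_biUnion_le

lemma card_le_sum_card_of_forall_nonempty [Fintype α] (g : α → Finset (Fin k))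
    (h : ∀ u, (g u).Nonempty) : Fintype.card α ≤ ∑ u, (g u).card :=
  calc Fintype.card α = ∑ _u : α, 1 := by simp
    _ ≤ ∑ u, (g u).card := sum_le_sum fun u _ ↦ (h u).card_pos

lemma isKRDF_const_univ (G : SimpleGraph V) : IsKRDF G k fun _ ↦ univ :=
  fun _ hv i ↦ absurd (hv ▸ mem_univ i) (notMem_empty i)

lemma rdnum_le [Fintype V] {G : SimpleGraph V} {f : V → Finset (Fin k)} (hf : IsKRDF G k f) :
    rdnum G k ≤ ∑ v, (f v).card :=
  Nat.sInf_le ⟨f, hf, rfl⟩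

lemma le_rdnum [Fintype V] {G : SimpleGraph V} {n : ℕ}
    (h : ∀ f, IsKRDF G k f → n ≤ ∑ v, (f v).card) : n ≤ rdnum G k := by
  obtain ⟨f, hf, hw⟩ := Nat.sInf_mem (⟨_, _, isKRDF_const_univ G, rfl⟩ :
    {n | ∃ f : V → Finset (Fin k), IsKRDF G k f ∧ ∑ v, (f v).card = n}.Nonempty)
  exact (h f hf).trans_eq hw

section CompleteBipartite

variable {f : α ⊕ β → Finset (Fin k)}

lemma IsKRDF.le_sum_inr_of_inl_eq_empty [Fintype β]
    (hf : IsKRDF (completeBipartiteGraph α β) k f) {i : α} (hi : f (.inl i) = ∅) :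
    k ≤ ∑ j, (f (.inr j)).card := by
  refine card_le_sum_card_of_forall_exists_mem _ fun c ↦ ?_
  obtain ⟨_ | j, hadj, hc⟩ := hf _ hi c
  · simp at hadj
  · exact ⟨j, hc⟩

lemma IsKRDF.le_sum_inl_of_inr_eq_empty [Fintype α]
    (hf : IsKRDF (completeBipartiteGraph α β) k f) {j : β} (hj : f (.inr j) = ∅) :
    k ≤ ∑ i, (f (.inl i)).card := by
  refine card_le_sum_card_of_forall_exists_mem _ fun c ↦ ?_
  obtain ⟨i | _, hadj, hc⟩ := hf _ hj c
  · exact ⟨i, hc⟩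
  · simp at hadj

variable [Fintype α] [Fintype β]

lemma IsKRDF.min_card_le_sum (hf : IsKRDF (completeBipartiteGraph α β) k f) :
    min (min (Fintype.card α) (Fintype.card β)) (2 * k) ≤ ∑ v, (f v).card := by
  rw [Fintype.sum_sum_type]
  by_cases hα : ∀ i, (f (.inl i)).Nonempty
  · have := card_le_sum_card_of_forall_nonempty _ hα
    omega
  obtain ⟨i, hi⟩ := not_forall.1 hα
  have hβk := hf.le_sum_inr_of_inl_eq_empty (not_nonempty_iff_eq_empty.1 hi)
  by_cases hβ : ∀ j, (f (.inr j)).Nonempty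
  · have := card_le_sum_card_of_forall_nonempty _ hβ
    omega
  obtain ⟨j, hj⟩ := not_forall.1 hβ
  have hαk := hf.le_sum_inl_of_inr_eq_empty (not_nonempty_iff_eq_empty.1 hj)
  omega

lemma min_card_le_rdnum_completeBipartiteGraph :
    min (min (Fintype.card α) (Fintype.card β)) (2 * k) ≤
      rdnum (completeBipartiteGraph α β) k :=
  le_rdnum fun _ hf ↦ hf.min_card_le_sum

lemma rdnum_completeBipartiteGraph_le_two_mul (a : α) (b : β) :
    rdnum (completeBipartiteGraph α β) k ≤ 2 * k := by
  classical
  let f : α ⊕ β → Finset (Fin k) :=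
    Sum.elim (fun i ↦ if i = a then univ else ∅) (fun j ↦ if j = b then univ else ∅)
  have hf : IsKRDF (completeBipartiteGraph α β) k f := by
    rintro (_ | _) - c
    · exact ⟨.inr b, by simp, by simp [f]⟩
    · exact ⟨.inl a, by simp, by simp [f]⟩
  calc rdnum (completeBipartiteGraph α β) k ≤ ∑ v, (f v).card := rdnum_le hf
    _ = 2 * k := by simp [f, Fintype.sum_sum_type, apply_ite, two_mul]

end CompleteBipartite

theorem rdnum_completeBipartite_large_general (a b k : ℕ) (ha : 1 ≤ a) (hab : a ≤ b)
    (h2k : 2 * k ≤ a) :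
    rdnum (completeBipartiteGraph (Fin a) (Fin b)) k = 2 * k := by
  have hb : 0 < b := ha.trans hab
  refine le_antisymm (rdnum_completeBipartiteGraph_le_two_mul (⟨0, ha⟩ : Fin a) ⟨0, hb⟩) ?_
  have := min_card_le_rdnum_completeBipartiteGraph (α := Fin a) (β := Fin b) (k := k)
  simp only [Fintype.card_fin] at this
  omega

theorem rdnum_completeBipartite_large (a b k : ℕ) (ha : 1 ≤ a) (hab : a ≤ b) (hk : 1 ≤ k)
    (h : k < a + b) (h2k : 2 * k ≤ a) :
    rdnum (completeBipartiteGraph (Fin a) (Fin b)) k = 2 * k :=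
  rdnum_completeBipartite_large_general a b k ha hab h2k
end

section
/- Let a ≤ b be positive integers and k ≥ 2 with a + b > k and a ≤ ⌊k/2⌋. Then the k-rainbow total domination number of K_{a,b} equals k. -/
/-!
An empty label forces all `k` colours to appear among the neighbours, and without empty labels
every vertex carries a colour; with at least `k` vertices the weight is therefore at least `k`.
Conversely, since `2a ≤ k`, the colours split into `a` classes of size at least two; putting these
classes on the `a`-side of `K_{a,b}` and nothing on the `b`-side gives a rainbow total dominating
function of weight `k`, the singleton condition being vacuous.
-/

open SimpleGraph Finset

section

variable {V : Type*} {G : SimpleGraph V} {k : ℕ} {f : V → Finset (Fin k)}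

lemma IsKRDF.le_sum_card [Fintype V] (hf : IsKRDF G k f) (hk : k ≤ Fintype.card V) :
    k ≤ ∑ v, #(f v) := by
  by_cases hempty : ∃ v, f v = ∅
  · obtain ⟨v, hv⟩ := hempty
    have hcover : (univ : Finset (Fin k)) ⊆ univ.biUnion f := fun i _ ↦ by
      obtain ⟨u, -, hu⟩ := hf v hv i
      exact mem_biUnion.2 ⟨u, mem_univ u, hu⟩
    calc k = #(univ : Finset (Fin k)) := by simp
      _ ≤ #(univ.biUnion f) := card_le_card hcover
      _ ≤ ∑ v, #(f v) := card_biUnion_le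
  · have hne (v : V) : (f v).Nonempty := nonempty_iff_ne_empty.2 fun hv ↦ hempty ⟨v, hv⟩
    calc k ≤ ∑ _v : V, 1 := by simpa using hk
      _ ≤ ∑ v, #(f v) := sum_le_sum fun v _ ↦ card_pos.2 (hne v)

lemma isKRTDF_iff_isKRDF_of_card_ne_one (hf : ∀ v, #(f v) ≠ 1) :
    IsKRTDF G k f ↔ IsKRDF G k f :=
  ⟨And.left, fun h ↦ ⟨h, fun v i hv ↦ absurd (by simp [hv]) (hf v)⟩⟩

lemma rtdnum_eq_of_isKRTDF [Fintype V] (hf : IsKRTDF G k f) (hw : ∑ v, #(f v) = k)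
    (hk : k ≤ Fintype.card V) : rtdnum G k = k := by
  have hmem : k ∈ {n | ∃ f : V → Finset (Fin k), IsKRTDF G k f ∧ ∑ v, #(f v) = n} := ⟨f, hf, hw⟩
  refine le_antisymm (Nat.sInf_le hmem) ?_
  obtain ⟨f', hf', hw'⟩ := Nat.sInf_mem ⟨k, hmem⟩
  exact (hf'.1.le_sum_card hk).trans_eq hw'

end

lemma exists_isKRTDF_completeBipartiteGraph {α β : Type*} [Fintype α] [DecidableEq α]
    [Fintype β] {k : ℕ} (g : Fin k → α) (hg : ∀ i, 2 ≤ #{c | g c = i}) :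
    ∃ f, IsKRTDF (completeBipartiteGraph α β) k f ∧ ∑ v, #(f v) = k := by
  let f : α ⊕ β → Finset (Fin k) := Sum.elim (fun i ↦ ({c | g c = i} : Finset (Fin k))) fun _ ↦ ∅
  have hleft (i : α) : 2 ≤ #(f (.inl i)) := hg i
  have hf : ∀ v, #(f v) ≠ 1 := by
    rintro (i | j)
    · exact (one_lt_two.trans_le (hleft i)).ne'
    · simp [f]
  refine ⟨f, (isKRTDF_iff_isKRDF_of_card_ne_one hf).2 ?_, ?_⟩
  · rintro (i | j) hv c
    · exact absurd (hleft i) (by simp [hv])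
    · exact ⟨.inl (g c), by simp, by simp [f]⟩
  · rw [Fintype.sum_sum_type]
    simpa [f] using (card_eq_sum_card_fiberwise (s := univ) (t := univ) (f := g)
      fun c _ ↦ mem_univ (g c)).symm

lemma exists_fin_two_le_card_fiber {a k : ℕ} (ha : 1 ≤ a) (hak : 2 * a ≤ k) :
    ∃ g : Fin k → Fin a, ∀ i, 2 ≤ #{c | g c = i} := by
  refine ⟨fun c ↦ ⟨min (c / 2) (a - 1), by omega⟩, fun i ↦ ?_⟩
  have hpair : ({⟨2 * i, by omega⟩, ⟨2 * i + 1, by omega⟩} : Finset (Fin k)) ⊆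
      ({c | (⟨min (c / 2) (a - 1), by omega⟩ : Fin a) = i} : Finset (Fin k)) := by
    intro c hc
    simp only [mem_insert, mem_singleton] at hc
    rcases hc with rfl | rfl <;> simp [Fin.ext_iff] <;> omega
  exact (card_pair (by simp [Fin.ext_iff])).symm.le.trans (card_le_card hpair)

theorem rtdnum_completeBipartite_small_general (a b k : ℕ) (ha : 1 ≤ a)
    (h : k < a + b) (hak : a ≤ k / 2) :
    rtdnum (completeBipartiteGraph (Fin a) (Fin b)) k = k := by
  obtain ⟨g, hg⟩ := exists_fin_two_le_card_fiber (k := k) ha (by omega)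
  obtain ⟨f, hf, hw⟩ := exists_isKRTDF_completeBipartiteGraph (β := Fin b) g hg
  exact rtdnum_eq_of_isKRTDF hf hw (by simp; omega)

theorem rtdnum_completeBipartite_small (a b k : ℕ) (ha : 1 ≤ a) (hab : a ≤ b) (hk : 2 ≤ k)
    (h : k < a + b) (hak : a ≤ k / 2) :
    rtdnum (completeBipartiteGraph (Fin a) (Fin b)) k = k :=
  rtdnum_completeBipartite_small_general a b k ha h hak
end

section
/- Let a ≤ b be positive integers and k ≥ 2 with a ≥ ⌈(3k−2)/2⌉. Then the k-rainbow total domination number of K_{a,b} equals 2k. -/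
open SimpleGraph Finset

/-!
Putting all `k` colours on one vertex of each side gives weight `2k`. Conversely, if both sides
carry an empty label, each side sees every colour and has weight at least `k`; if no label is
empty, the weight is at least `a + b ≥ 2a ≥ 2k`. Otherwise one side, with labels `g`, has no
empty label and sees every colour, while the other side sees every colour of a singleton label
of `g`. If `p` vertices of `g` carry singletons, using `s` colours, then `∑ |g| ≥ 2a - p` and
`∑ |g| ≥ k - s + p`, the other side weighs at least `s`, and `s ≥ 1` once `p ≥ 1`; adding the
two bounds gives `2 · weight ≥ 2a + k + s ≥ 4k - 1`, while `p = 0` gives `∑ |g| ≥ 2a`.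
-/

section Labelling

variable {α β : Type*} {k : ℕ}

/-- The `k`RTDF conditions of `completeBipartiteGraph α β` at the vertices labelled by `g`,
whose neighbours are exactly the vertices labelled by `h`. -/
def RainbowTotallyDominatedBy (g : α → Finset (Fin k)) (h : β → Finset (Fin k)) : Prop :=
  (∀ x, g x = ∅ → ∀ i, ∃ y, i ∈ h y) ∧ ∀ x i, g x = {i} → ∃ y, i ∈ h y

theorem rainbowTotallyDominatedBy_of_eq_univ (g : α → Finset (Fin k)) {h : β → Finset (Fin k)}
    {y : β} (hy : h y = univ) : RainbowTotallyDominatedBy g h :=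
  ⟨fun _ _ i => ⟨y, hy ▸ mem_univ i⟩, fun _ i _ => ⟨y, hy ▸ mem_univ i⟩⟩

theorem exists_completeBipartiteGraph_adj_inl {x : α} {p : α ⊕ β → Prop} :
    (∃ u, (completeBipartiteGraph α β).Adj (.inl x) u ∧ p u) ↔ ∃ y, p (.inr y) := by
  simp

theorem exists_completeBipartiteGraph_adj_inr {y : β} {p : α ⊕ β → Prop} :
    (∃ u, (completeBipartiteGraph α β).Adj (.inr y) u ∧ p u) ↔ ∃ x, p (.inl x) := by
  simp

theorem isKRTDF_completeBipartiteGraph_iff {f : α ⊕ β → Finset (Fin k)} :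
    IsKRTDF (completeBipartiteGraph α β) k f ↔
      RainbowTotallyDominatedBy (f ∘ Sum.inl) (f ∘ Sum.inr) ∧
        RainbowTotallyDominatedBy (f ∘ Sum.inr) (f ∘ Sum.inl) := by
  simp only [IsKRTDF, IsKRDF, RainbowTotallyDominatedBy, Sum.forall, Function.comp_apply,
    exists_completeBipartiteGraph_adj_inl, exists_completeBipartiteGraph_adj_inr]
  exact and_and_and_comm

theorem card_le_sum_card_of_nonempty [Fintype α] {g : α → Finset (Fin k)}
    (hg : ∀ x, (g x).Nonempty) : Fintype.card α ≤ ∑ x, #(g x) := by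
  simpa using sum_le_sum fun x (_ : x ∈ univ) => show 1 ≤ #(g x) from (hg x).card_pos

theorem card_le_sum_card_of_forall_exists_mem_s7 [Fintype β] {s : Finset (Fin k)}
    {h : β → Finset (Fin k)} (hs : ∀ i ∈ s, ∃ y, i ∈ h y) : #s ≤ ∑ y, #(h y) := by
  classical
  calc #s ≤ #(univ.biUnion h) :=
        card_le_card fun i hi => mem_biUnion.2 ((hs i hi).imp fun y hy => ⟨mem_univ y, hy⟩)
    _ ≤ ∑ y, #(h y) := card_biUnion_le

theorem le_sum_card_of_forall_exists_mem [Fintype β] {h : β → Finset (Fin k)}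
    (hh : ∀ i, ∃ y, i ∈ h y) : k ≤ ∑ y, #(h y) := by
  simpa using card_le_sum_card_of_forall_exists_mem_s7 (s := univ) fun i _ => hh i

theorem two_mul_le_sum_card_add_sum_card_of_nonempty [Fintype α] [Fintype β]
    {g : α → Finset (Fin k)} {h : β → Finset (Fin k)}
    (hα : (3 * k - 1) / 2 ≤ Fintype.card α) (hg : ∀ x, (g x).Nonempty)
    (hcover : ∀ i, ∃ x, i ∈ g x) (hsingle : ∀ x i, g x = {i} → ∃ y, i ∈ h y) :
    2 * k ≤ ∑ x, #(g x) + ∑ y, #(h y) := by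
  classical
  set A := univ.filter fun x => #(g x) = 1
  set S := A.biUnion g
  have hS_le : #S ≤ ∑ y, #(h y) := by
    refine card_le_sum_card_of_forall_exists_mem_s7 fun i hi => ?_
    obtain ⟨x, hx, hix⟩ := mem_biUnion.1 hi
    obtain ⟨j, hj⟩ := card_eq_one.1 (mem_filter.1 hx).2
    rw [hj, mem_singleton] at hix
    exact hsingle x i (hix ▸ hj)
  have hS_pos : #A = 0 ∨ 1 ≤ #S := by
    refine or_iff_not_imp_left.2 fun hA => card_pos.2 ?_
    obtain ⟨x, hx⟩ := card_pos.1 (Nat.pos_of_ne_zero hA)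
    exact (hg x).mono (subset_biUnion_of_mem g hx)
  have hA_sum : ∑ x ∈ A, #(g x) = #A := by
    rw [card_eq_sum_ones]
    exact sum_congr rfl fun x hx => (mem_filter.1 hx).2
  have hAc_sum : 2 * (Fintype.card α - #A) ≤ ∑ x ∈ Aᶜ, #(g x) := by
    rw [← card_compl, mul_comm, ← smul_eq_mul, ← sum_const]
    refine sum_le_sum fun x hx => ?_
    have : #(g x) ≠ 1 := by simpa [A] using hx
    have := (hg x).card_pos
    omega
  have hcov : k ≤ #S + ∑ x ∈ Aᶜ, #(g x) := by
    have hsub : univ ⊆ S ∪ Aᶜ.biUnion g := fun i _ => by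
      obtain ⟨x, hx⟩ := hcover i
      by_cases hxA : x ∈ A
      · exact mem_union_left _ (mem_biUnion.2 ⟨x, hxA, hx⟩)
      · exact mem_union_right _ (mem_biUnion.2 ⟨x, mem_compl.2 hxA, hx⟩)
    calc k = #(univ : Finset (Fin k)) := (card_fin k).symm
      _ ≤ #S + #(Aᶜ.biUnion g) := (card_le_card hsub).trans (card_union_le _ _)
      _ ≤ #S + ∑ x ∈ Aᶜ, #(g x) := Nat.add_le_add_left card_biUnion_le _
  have hsplit := sum_add_sum_compl A fun x => #(g x)
  have hA_le : #A ≤ Fintype.card α := card_le_univ A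
  omega

theorem two_mul_le_sum_card_add_sum_card [Fintype α] [Fintype β]
    {g : α → Finset (Fin k)} {h : β → Finset (Fin k)}
    (hα : (3 * k - 1) / 2 ≤ Fintype.card α) (hαβ : Fintype.card α ≤ Fintype.card β)
    (hgh : RainbowTotallyDominatedBy g h) (hhg : RainbowTotallyDominatedBy h g) :
    2 * k ≤ ∑ x, #(g x) + ∑ y, #(h y) := by
  by_cases hg : ∀ x, (g x).Nonempty
  · by_cases hh : ∀ y, (h y).Nonempty
    · have := card_le_sum_card_of_nonempty hg
      have := card_le_sum_card_of_nonempty hh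
      omega
    · obtain ⟨y, hy⟩ := not_forall.1 hh
      exact two_mul_le_sum_card_add_sum_card_of_nonempty hα hg
        (hhg.1 y (not_nonempty_iff_eq_empty.1 hy)) hgh.2
  · obtain ⟨x, hx⟩ := not_forall.1 hg
    have hh_cover := hgh.1 x (not_nonempty_iff_eq_empty.1 hx)
    by_cases hh : ∀ y, (h y).Nonempty
    · rw [add_comm]
      exact two_mul_le_sum_card_add_sum_card_of_nonempty (hα.trans hαβ) hh hh_cover hhg.2
    · obtain ⟨y, hy⟩ := not_forall.1 hh
      have := le_sum_card_of_forall_exists_mem hh_cover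
      have := le_sum_card_of_forall_exists_mem (hhg.1 y (not_nonempty_iff_eq_empty.1 hy))
      omega

theorem two_mul_le_sum_card_of_isKRTDF_completeBipartiteGraph [Fintype α] [Fintype β]
    (hα : (3 * k - 1) / 2 ≤ Fintype.card α)
    (hαβ : Fintype.card α ≤ Fintype.card β) {f : α ⊕ β → Finset (Fin k)}
    (hf : IsKRTDF (completeBipartiteGraph α β) k f) : 2 * k ≤ ∑ v, #(f v) := by
  rw [isKRTDF_completeBipartiteGraph_iff] at hf
  rw [Fintype.sum_sum_type]
  exact two_mul_le_sum_card_add_sum_card hα hαβ hf.1 hf.2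

theorem exists_isKRTDF_completeBipartiteGraph_sum_card_eq [Fintype α] [Fintype β]
    (x : α) (y : β) (k : ℕ) :
    ∃ f : α ⊕ β → Finset (Fin k), IsKRTDF (completeBipartiteGraph α β) k f ∧
      ∑ v, #(f v) = 2 * k := by
  classical
  refine ⟨Sum.elim (fun x' => if x' = x then univ else ∅) (fun y' => if y' = y then univ else ∅),
    ?_, ?_⟩
  · rw [isKRTDF_completeBipartiteGraph_iff]
    exact ⟨rainbowTotallyDominatedBy_of_eq_univ _ (if_pos rfl),
      rainbowTotallyDominatedBy_of_eq_univ _ (if_pos rfl)⟩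
  · simp only [Fintype.sum_sum_type, Sum.elim_inl, Sum.elim_inr, apply_ite, card_univ,
      Fintype.card_fin, card_empty, sum_ite_eq', mem_univ, if_true]
    ring

end Labelling

theorem rtdnum_completeBipartite_large_general (a b k : ℕ) (ha : 1 ≤ a) (hab : a ≤ b)
    (h2 : (3 * k - 1) / 2 ≤ a) :
    rtdnum (completeBipartiteGraph (Fin a) (Fin b)) k = 2 * k := by
  refine IsLeast.csInf_eq ⟨?_, ?_⟩
  · exact exists_isKRTDF_completeBipartiteGraph_sum_card_eq ⟨0, ha⟩ ⟨0, ha.trans hab⟩ k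
  · rintro n ⟨f, hf, rfl⟩
    exact two_mul_le_sum_card_of_isKRTDF_completeBipartiteGraph (by simpa using h2)
      (by simpa using hab) hf

theorem rtdnum_completeBipartite_large (a b k : ℕ) (ha : 1 ≤ a) (hab : a ≤ b) (hk : 2 ≤ k)
    (h2 : (3 * k - 1) / 2 ≤ a) :
    rtdnum (completeBipartiteGraph (Fin a) (Fin b)) k = 2 * k :=
  rtdnum_completeBipartite_large_general a b k ha hab h2
end

section
/- For any graph G and integers 1 ≤ k ≤ k', the k'-rainbow domination number satisfies γ_{rk'}(G) ≤ (k'/k) · γ_{rk}(G). -/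
/-!
Pull an optimal `k`RDF `f` back along a surjection `φ : Fin k' → Fin k`, labelling `v` by
`φ⁻¹ (f v)`: empty labels stay empty and every colour `j` is seen wherever `φ j` was, so this is a
`k'`RDF. For the `k` rotations `φ_r j = (j mod k) + r` every `j` lies in `φ_r⁻¹ (f v)` for exactly
`#(f v)` values of `r`, so the `k` pull-backs have total weight `k' · γ_{rk}(G)`, and one of them
weighs at most `(k'/k) · γ_{rk}(G)`.
-/

open SimpleGraph Finset

theorem card_filter_add_left_mem {A : Type*} [AddGroup A] [Fintype A] [DecidableEq A]
    (a : A) (S : Finset A) : #{r | a + r ∈ S} = #S :=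
  card_equiv (Equiv.addLeft a) fun _ => by simp

theorem IsKRDF.comap {V : Type*} {G : SimpleGraph V} {k k' : ℕ} {f : V → Finset (Fin k)}
    (hf : IsKRDF G k f) {φ : Fin k' → Fin k} (hφ : Function.Surjective φ) :
    IsKRDF G k' fun v => {j | φ j ∈ f v} := by
  intro v hv j
  have hfv : f v = ∅ := by
    refine eq_empty_of_forall_notMem fun c hc => ?_
    obtain ⟨i, rfl⟩ := hφ c
    have hi : i ∈ ({j | φ j ∈ f v} : Finset (Fin k')) := by simpa using hc
    exact notMem_empty i (hv ▸ hi)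
  obtain ⟨u, hadj, hu⟩ := hf v hfv (φ j)
  exact ⟨u, hadj, by simpa using hu⟩

theorem exists_isKRDF_sum_card_eq_rdnum {V : Type*} [Fintype V] (G : SimpleGraph V) (k : ℕ) :
    ∃ f : V → Finset (Fin k), IsKRDF G k f ∧ ∑ v, (f v).card = rdnum G k := by
  have hne : {n | ∃ f : V → Finset (Fin k), IsKRDF G k f ∧ ∑ v, (f v).card = n}.Nonempty :=
    ⟨_, fun _ => univ, fun _ hv i => absurd (hv ▸ mem_univ i) (notMem_empty i), rfl⟩
  exact Nat.sInf_mem hne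

theorem rdnum_le_sum_card {V : Type*} [Fintype V] {G : SimpleGraph V} {k : ℕ}
    {f : V → Finset (Fin k)} (hf : IsKRDF G k f) : rdnum G k ≤ ∑ v, (f v).card :=
  Nat.sInf_le ⟨f, hf, rfl⟩

section Rotation

variable {k k' : ℕ} [NeZero k]

def colourRotation (k' : ℕ) (r : Fin k) (j : Fin k') : Fin k := Fin.ofNat k j + r

theorem colourRotation_surjective (hkk' : k ≤ k') (r : Fin k) :
    Function.Surjective (colourRotation k' r) := fun i =>
  ⟨Fin.castLE hkk' (i - r), by simp [colourRotation, Fin.val_castLE]⟩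

theorem sum_card_filter_colourRotation_mem (S : Finset (Fin k)) :
    ∑ r : Fin k, #{j : Fin k' | colourRotation k' r j ∈ S} = k' * #S :=
  calc ∑ r : Fin k, #{j : Fin k' | colourRotation k' r j ∈ S}
      = ∑ j : Fin k', #{r : Fin k | Fin.ofNat k j + r ∈ S} := by
        simp only [card_eq_sum_ones, sum_filter]
        exact Finset.sum_comm
    _ = k' * #S := by simp [card_filter_add_left_mem]

end Rotation

theorem rdnum_mono_frac {V : Type*} [Fintype V] (G : SimpleGraph V) (k k' : ℕ)
    (hk : 1 ≤ k) (hkk' : k ≤ k') :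
    k * rdnum G k' ≤ k' * rdnum G k := by
  have : NeZero k := ⟨by omega⟩
  obtain ⟨f, hf, hw⟩ := exists_isKRDF_sum_card_eq_rdnum G k
  let g : Fin k → V → Finset (Fin k') := fun r v => {j | colourRotation k' r j ∈ f v}
  have hweight : ∑ r, ∑ v, (g r v).card = k' * rdnum G k := by
    rw [sum_comm, ← hw, mul_sum]
    exact sum_congr rfl fun v _ => sum_card_filter_colourRotation_mem (f v)
  have htotal : ∑ r, k * ∑ v, (g r v).card = ∑ _r : Fin k, k' * rdnum G k := by
    rw [← mul_sum, hweight, sum_const, card_univ, Fintype.card_fin, smul_eq_mul]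
  obtain ⟨r, -, hr⟩ := exists_le_of_sum_le univ_nonempty htotal.le
  exact (Nat.mul_le_mul_left k (rdnum_le_sum_card (hf.comap
    (colourRotation_surjective hkk' r)))).trans hr
end

section
/- For any graph G and integer k ≥ 2, γ_{(k−1)rt}(G) ≤ γ_{krt}(G). -/
open SimpleGraph Finset

/-!
Merging the last color into another color `a` turns a `(k+1)`-rainbow total dominating function
into a `k`-rainbow one of no larger weight; the only label that becomes a singleton without being
one already is `{a, k}`, and it is relabelled `{a, b}` with `b ≠ a`. This needs two colors to
remain. For `k = 1` a `1`RTDF is a total dominating set: take the support `S` of a `2`RTDF together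
with one neighbor of each vertex having no neighbor in `S`; such a vertex carries a label of size
at least two, which pays for the added neighbor. If `G` has an isolated vertex there is no `1`RTDF
and `rtdnum G 1 = 0`; with no colors at all the empty labelling is a `0`RTDF.
-/

section

variable {V : Type*} {G : SimpleGraph V} {k m : ℕ}

theorem rtdnum_le [Fintype V] {f : V → Finset (Fin k)} (hf : IsKRTDF G k f) :
    rtdnum G k ≤ ∑ v, (f v).card :=
  Nat.sInf_le ⟨f, hf, rfl⟩

theorem isKRTDF_const_univ (hk : k ≠ 1) : IsKRTDF G k fun _ => univ := by
  refine ⟨fun v hv i => absurd (hv ▸ mem_univ i) (notMem_empty i), fun v i hv => ?_⟩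
  exact absurd (by simpa using congrArg card hv) hk

theorem rtdnum_le_rtdnum_of_forall [Fintype V] (hk : ∃ f : V → Finset (Fin k), IsKRTDF G k f)
    (h : ∀ f : V → Finset (Fin k), IsKRTDF G k f → rtdnum G m ≤ ∑ v, (f v).card) :
    rtdnum G m ≤ rtdnum G k := by
  obtain ⟨f, hf⟩ := hk
  obtain ⟨f, hf, hsum⟩ : rtdnum G k ∈ _ := Nat.sInf_mem ⟨_, f, hf, rfl⟩
  exact hsum ▸ h f hf

theorem IsKRTDF.of_image_subset {f : V → Finset (Fin k)} {g : V → Finset (Fin m)}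
    (hf : IsKRTDF G k f) (φ : Fin k → Fin m) (hφ : Function.Surjective φ)
    (himage : ∀ v, (f v).image φ ⊆ g v) (hempty : ∀ v, g v = ∅ → f v = ∅)
    (hsingleton : ∀ v j, g v = {j} → ∃ i, f v = {i}) : IsKRTDF G m g := by
  have hmem : ∀ {u i}, i ∈ f u → φ i ∈ g u := fun hi => himage _ (mem_image_of_mem φ hi)
  refine ⟨fun v hv j => ?_, fun v j hv => ?_⟩
  · obtain ⟨i, rfl⟩ := hφ j
    obtain ⟨u, hadj, hi⟩ := hf.1 v (hempty v hv) i
    exact ⟨u, hadj, hmem hi⟩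
  · obtain ⟨i, hi⟩ := hsingleton v j hv
    obtain ⟨u, hadj, hiu⟩ := hf.2 v i hi
    have hij : φ i = j := mem_singleton.mp (hv ▸ hmem (hi ▸ mem_singleton_self i))
    exact ⟨u, hadj, hij ▸ hmem hiu⟩

def mergeLast (a : Fin m) : Fin (m + 1) → Fin m :=
  Fin.lastCases a id

theorem mergeLast_surjective (a : Fin m) : Function.Surjective (mergeLast a) :=
  fun j => ⟨j.castSucc, by simp [mergeLast]⟩

theorem eq_of_mergeLast_eq {a j : Fin m} {c : Fin (m + 1)} (h : mergeLast a c = j) :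
    c = j.castSucc ∨ c = Fin.last m ∧ j = a := by
  induction c using Fin.lastCases <;> simp_all [mergeLast]

theorem image_mergeLast_eq_singleton {a j : Fin m} {s : Finset (Fin (m + 1))}
    (h : s.image (mergeLast a) = {j}) : (∃ i, s = {i}) ∨ s = {a.castSucc, Fin.last m} := by
  have hs : ∀ c ∈ s, c = j.castSucc ∨ c = Fin.last m ∧ j = a := fun c hc =>
    eq_of_mergeLast_eq (mem_singleton.mp (h ▸ mem_image_of_mem _ hc))
  obtain ⟨c, hc⟩ : s.Nonempty := image_nonempty.mp (h ▸ singleton_nonempty j)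
  by_cases hlast : Fin.last m ∈ s
  · obtain rfl : j = a := ((hs _ hlast).resolve_left (Fin.castSucc_lt_last j).ne').2
    by_cases hj : j.castSucc ∈ s
    · right; ext; grind
    · left; exact ⟨Fin.last m, by ext; grind⟩
  · left; exact ⟨j.castSucc, by ext; grind⟩

def mergeLastLabel (a b : Fin m) (s : Finset (Fin (m + 1))) : Finset (Fin m) :=
  if s = {a.castSucc, Fin.last m} then {a, b} else s.image (mergeLast a)

theorem card_mergeLastLabel_le (a b : Fin m) (s : Finset (Fin (m + 1))) :
    (mergeLastLabel a b s).card ≤ s.card := by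
  unfold mergeLastLabel
  split_ifs with hs
  · rw [hs, card_pair (Fin.castSucc_lt_last a).ne]
    exact card_le_two
  · exact card_image_le

theorem IsKRTDF.mergeLastLabel {f : V → Finset (Fin (m + 1))} (hf : IsKRTDF G (m + 1) f)
    {a b : Fin m} (hab : a ≠ b) : IsKRTDF G m fun v => mergeLastLabel a b (f v) := by
  refine hf.of_image_subset (mergeLast a) (mergeLast_surjective a) (fun v => ?_) (fun v hv => ?_)
    (fun v j hv => ?_) <;> unfold _root_.mergeLastLabel at * <;> split_ifs at * with hpair
  · simp [hpair, mergeLast]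
  · rfl
  · simp at hv
  · exact image_eq_empty.mp hv
  · simpa [card_pair hab] using congrArg card hv
  · exact (image_mergeLast_eq_singleton hv).resolve_right hpair

theorem rtdnum_zero [Fintype V] : rtdnum G 0 = 0 := by
  have hf : IsKRTDF G 0 fun _ => ∅ := ⟨fun _ _ i => i.elim0, fun _ i => i.elim0⟩
  simpa using rtdnum_le hf

theorem rtdnum_le_rtdnum_succ [Fintype V] (hm : 2 ≤ m) : rtdnum G m ≤ rtdnum G (m + 1) := by
  refine rtdnum_le_rtdnum_of_forall ⟨_, isKRTDF_const_univ (by omega)⟩ fun f hf => ?_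
  calc rtdnum G m ≤ ∑ v, (mergeLastLabel ⟨0, by omega⟩ ⟨1, hm⟩ (f v)).card :=
        rtdnum_le (hf.mergeLastLabel (Fin.ne_of_val_ne zero_ne_one))
    _ ≤ ∑ v, (f v).card := sum_le_sum fun v _ => card_mergeLastLabel_le _ _ _

theorem isKRTDF_one_iff {g : V → Finset (Fin 1)} :
    IsKRTDF G 1 g ↔ ∀ v, ∃ u, G.Adj v u ∧ (g u).Nonempty := by
  refine ⟨fun hg v => ?_, fun h => ⟨fun v _ i => ?_, fun v i _ => ?_⟩⟩
  · rcases subset_singleton_iff.mp (subset_univ (g v)) with hv | hv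
    · obtain ⟨u, hadj, hu⟩ := hg.1 v hv 0
      exact ⟨u, hadj, 0, hu⟩
    · obtain ⟨u, hadj, hu⟩ := hg.2 v 0 hv
      exact ⟨u, hadj, 0, hu⟩
  all_goals
    obtain ⟨u, hadj, x, hx⟩ := h v
    exact ⟨u, hadj, Subsingleton.elim x i ▸ hx⟩

theorem rtdnum_one_eq_zero [Fintype V] {v : V} (hv : ∀ u, ¬ G.Adj v u) : rtdnum G 1 = 0 := by
  refine Nat.sInf_eq_zero.mpr (Or.inr (Set.eq_empty_iff_forall_notMem.mpr ?_))
  rintro n ⟨g, hg, -⟩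
  obtain ⟨u, hadj, -⟩ := isKRTDF_one_iff.mp hg v
  exact hv u hadj

theorem rtdnum_one_le_card [Fintype V] {T : Finset V} (hT : ∀ v, ∃ u ∈ T, G.Adj v u) :
    rtdnum G 1 ≤ T.card := by
  classical
  have hg : IsKRTDF G 1 fun v => if v ∈ T then univ else ∅ :=
    isKRTDF_one_iff.mpr fun v => (hT v).imp fun u ⟨huT, hadj⟩ => ⟨hadj, by simp [huT]⟩
  exact (rtdnum_le hg).trans_eq (by simp [apply_ite card])

theorem IsKRTDF.two_le_card {f : V → Finset (Fin k)} (hf : IsKRTDF G k f) (hk : 0 < k) {v : V}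
    (hv : ∀ u, G.Adj v u → f u = ∅) : 2 ≤ (f v).card := by
  by_contra! hlt
  rcases Nat.le_one_iff_eq_zero_or_eq_one.mp (Nat.lt_succ_iff.mp hlt) with h | h
  · obtain ⟨u, hadj, hu⟩ := hf.1 v (card_eq_zero.mp h) ⟨0, hk⟩
    simp [hv u hadj] at hu
  · obtain ⟨i, hi⟩ := card_eq_one.mp h
    obtain ⟨u, hadj, hu⟩ := hf.2 v i hi
    simp [hv u hadj] at hu

theorem IsKRTDF.exists_totalDominating_card_le [Fintype V] {f : V → Finset (Fin k)}
    (hf : IsKRTDF G k f) (hk : 0 < k) (hG : ∀ v, ∃ u, G.Adj v u) :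
    ∃ T : Finset V, (∀ v, ∃ u ∈ T, G.Adj v u) ∧ T.card ≤ ∑ v, (f v).card := by
  classical
  choose nbr hnbr using hG
  set S := univ.filter fun v => (f v).Nonempty
  set B := univ.filter fun v => ∀ u, G.Adj v u → f u = ∅
  refine ⟨S ∪ B.image nbr, fun v => ?_, ?_⟩
  · by_cases hv : v ∈ B
    · exact ⟨nbr v, mem_union_right _ (mem_image_of_mem _ hv), hnbr v⟩
    · simp only [B, mem_filter, mem_univ, true_and, not_forall] at hv
      obtain ⟨u, hadj, hu⟩ := hv
      exact ⟨u, mem_union_left _ (by simpa [S, nonempty_iff_ne_empty] using hu), hadj⟩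
  · have hpoint : ∀ v, ((if (f v).Nonempty then 1 else 0) +
        if ∀ u, G.Adj v u → f u = ∅ then 1 else 0) ≤ (f v).card := by
      intro v
      by_cases hB : ∀ u, G.Adj v u → f u = ∅
      · have := hf.two_le_card hk hB
        split_ifs <;> omega
      · have := card_pos (s := f v)
        split_ifs <;> simp_all
    calc (S ∪ B.image nbr).card ≤ S.card + B.card :=
          (card_union_le _ _).trans (Nat.add_le_add_left card_image_le _)
      _ = ∑ v, ((if (f v).Nonempty then 1 else 0) +
          if ∀ u, G.Adj v u → f u = ∅ then 1 else 0) := by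
        rw [sum_add_distrib, card_filter, card_filter]
      _ ≤ ∑ v, (f v).card := sum_le_sum fun v _ => hpoint v

theorem rtdnum_one_le_rtdnum_two [Fintype V] : rtdnum G 1 ≤ rtdnum G 2 := by
  by_cases hG : ∀ v, ∃ u, G.Adj v u
  · refine rtdnum_le_rtdnum_of_forall ⟨_, isKRTDF_const_univ (by omega)⟩ fun f hf => ?_
    obtain ⟨T, hT, hcard⟩ := hf.exists_totalDominating_card_le two_pos hG
    exact (rtdnum_one_le_card hT).trans hcard
  · push Not at hG
    obtain ⟨v, hv⟩ := hG
    exact (rtdnum_one_eq_zero hv).trans_le (Nat.zero_le _)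

end

theorem rtdnum_pred_le_general {V : Type*} [Fintype V] (G : SimpleGraph V) (k : ℕ) :
    rtdnum G (k - 1) ≤ rtdnum G k := by
  rcases k with _ | _ | _ | m
  · exact le_rfl
  · exact rtdnum_zero.trans_le (Nat.zero_le _)
  · exact rtdnum_one_le_rtdnum_two
  · exact rtdnum_le_rtdnum_succ (by omega)

theorem rtdnum_pred_le {V : Type*} [Fintype V] (G : SimpleGraph V) (k : ℕ) (hk : 2 ≤ k) :
    rtdnum G (k - 1) ≤ rtdnum G k :=
  rtdnum_pred_le_general G k
end

section
/- For any graphs G and H without isolated vertices and any integer k ≥ 2, γ_{krt}(G) · γ_{krt}(H) ≤ 2k · γ_{krt}(G □ H). -/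
open SimpleGraph Finset

/-!
A labelling `f` of `G` corresponds to the vertex set `{(v, i) | i ∈ f v}` of `G □ K_k`, and the
rainbow conditions say exactly that this set is totally dominating, so `γ_krt(G) = γ_t(G □ K_k)`
and `γ_krt(G) ≤ k γ_t(G)`. With Ho's inequality `γ_t(G) γ_t(H) ≤ 2 γ_t(G □ H)` applied to `G` and
`H □ K_k` this gives
`γ_krt(G) γ_krt(H) ≤ k γ_t(G) γ_t(H □ K_k) ≤ 2k γ_t(G □ H □ K_k) = 2k γ_krt(G □ H)`.

For Ho's inequality take minimum total dominating sets `D` of `G □ H` and `T` of `G`, and send each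
`v` to a neighbour `ι v ∈ T`. For `a ∈ T` let `P_a` be the `H`-coordinates of the vertices of `D`
lying over `ι⁻¹(a)`; `P_a` plus one neighbour of each vertex it leaves undominated totally
dominates `H`. The `P_a` have at most `|D|` elements in total, and so do the undominated parts:
for fixed `w`, by minimality of `T`, the `a ∈ T` whose `P_a` misses `w` are no more than the
vertices of `D` in the layer `V × {w}`.
-/

namespace SimpleGraph

variable {V W : Type*}

def IsTotalDominating (G : SimpleGraph V) (D : Finset V) : Prop :=
  ∀ v, ∃ u ∈ D, G.Adj u v

lemma exists_boxProd_adj {G : SimpleGraph V} (H : SimpleGraph W) (hG : ∀ v, ∃ u, G.Adj v u)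
    (p : V × W) : ∃ q, (G □ H).Adj p q := by
  obtain ⟨u, hu⟩ := hG p.1
  exact ⟨(u, p.2), boxProd_adj.2 (Or.inl ⟨hu, rfl⟩)⟩

lemma IsTotalDominating.map {G : SimpleGraph V} {G' : SimpleGraph W} {D : Finset V}
    (hD : G.IsTotalDominating D) (e : G ≃g G') :
    G'.IsTotalDominating (D.map e.toEquiv.toEmbedding) := by
  intro w
  obtain ⟨u, hu, huw⟩ := hD (e.symm w)
  exact ⟨e u, mem_map_of_mem _ hu, by simpa using e.map_adj_iff.2 huw⟩

lemma IsTotalDominating.prod_univ [Fintype W] {G : SimpleGraph V} {D : Finset V}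
    (hD : G.IsTotalDominating D) (H : SimpleGraph W) :
    (G □ H).IsTotalDominating (D ×ˢ univ) := by
  rintro ⟨v, w⟩
  obtain ⟨u, hu, huv⟩ := hD v
  exact ⟨(u, w), mem_product.2 ⟨hu, mem_univ w⟩, boxProd_adj.2 (Or.inl ⟨huv, rfl⟩)⟩

end SimpleGraph

section TotalDomination

variable {V W : Type*} [Fintype V] [Fintype W] {G : SimpleGraph V} {H : SimpleGraph W}

lemma totdomnum_le_card {D : Finset V} (hD : G.IsTotalDominating D) : totdomnum G ≤ #D :=
  Nat.sInf_le ⟨D, hD, rfl⟩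

lemma exists_isTotalDominating_card_eq_totdomnum (hG : ∀ v, ∃ u, G.Adj v u) :
    ∃ D : Finset V, G.IsTotalDominating D ∧ #D = totdomnum G :=
  Nat.sInf_mem (s := {n | ∃ D : Finset V, G.IsTotalDominating D ∧ #D = n})
    ⟨_, univ, fun v => (hG v).imp fun u hu => ⟨mem_univ u, hu.symm⟩, rfl⟩

lemma totdomnum_congr (e : G ≃g H) : totdomnum G = totdomnum H := by
  unfold totdomnum
  congr 1
  ext n
  constructor <;> rintro ⟨D, hD, rfl⟩
  · exact ⟨_, IsTotalDominating.map hD e, card_map _⟩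
  · exact ⟨_, IsTotalDominating.map hD e.symm, card_map _⟩

end TotalDomination

section Ho

open scoped Classical

variable {V W : Type*} {G : SimpleGraph V} {H : SimpleGraph W}

noncomputable def sndOfFiber (D : Finset (V × W)) (ι : V → V) (a : V) : Finset W :=
  (D.filter fun p => ι p.1 = a).image Prod.snd

lemma sum_card_sndOfFiber_le (D : Finset (V × W)) {T : Finset V} {ι : V → V}
    (hιT : ∀ v, ι v ∈ T) : ∑ a ∈ T, #(sndOfFiber D ι a) ≤ #D :=
  calc ∑ a ∈ T, #(sndOfFiber D ι a) ≤ ∑ a ∈ T, #(D.filter fun p => ι p.1 = a) :=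
        sum_le_sum fun _ _ => card_image_le
    _ = #D := (card_eq_sum_card_fiberwise fun p _ => hιT p.1).symm

variable [Fintype V] [Fintype W]

noncomputable def SimpleGraph.undominated (H : SimpleGraph W) (S : Finset W) : Finset W :=
  univ.filter fun w => ∀ u ∈ S, ¬ H.Adj u w

lemma totdomnum_le_card_add_card_undominated (hH : ∀ w, ∃ u, H.Adj w u) (S : Finset W) :
    totdomnum H ≤ #S + #(H.undominated S) := by
  choose nb hnb using hH
  have hdom : H.IsTotalDominating (S ∪ (H.undominated S).image nb) := by
    intro w
    by_cases hw : w ∈ H.undominated S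
    · exact ⟨nb w, mem_union_right _ (mem_image_of_mem nb hw), (hnb w).symm⟩
    · simp only [undominated, mem_filter, mem_univ, true_and, not_forall, not_not] at hw
      obtain ⟨u, hu, huw⟩ := hw
      exact ⟨u, mem_union_left _ hu, huw⟩
  calc totdomnum H ≤ #(S ∪ (H.undominated S).image nb) := totdomnum_le_card hdom
    _ ≤ #S + #((H.undominated S).image nb) := card_union_le _ _
    _ ≤ #S + #(H.undominated S) := Nat.add_le_add_left card_image_le _

lemma totdomnum_le_card_layer_add_card_dominating {D : Finset (V × W)} (hD : (G □ H).IsTotalDominating D)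
    {T : Finset V} {ι : V → V} (hιT : ∀ v, ι v ∈ T) (hι : ∀ v, G.Adj (ι v) v) (w : W) :
    totdomnum G ≤ #(D.filter fun p => p.2 = w) +
      #(T.filter fun a => w ∉ H.undominated (sndOfFiber D ι a)) := by
  set Dw := (D.filter fun p => p.2 = w).image Prod.fst
  set Tw := T.filter fun a => w ∉ H.undominated (sndOfFiber D ι a)
  have hdom : G.IsTotalDominating (Dw ∪ Tw) := by
    intro v
    by_cases hv : w ∉ H.undominated (sndOfFiber D ι (ι v))
    · exact ⟨ι v, mem_union_right _ (mem_filter.2 ⟨hιT v, hv⟩), hι v⟩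
    -- `(v, w)` cannot be dominated from its own `H`-layer, since that lies over `ι⁻¹(ι v)`.
    obtain ⟨q, hq, hqv⟩ := hD (v, w)
    rcases boxProd_adj.1 hqv with ⟨hG, hw⟩ | ⟨hH, hv'⟩
    · exact ⟨q.1, mem_union_left _ (mem_image_of_mem _ (mem_filter.2 ⟨hq, hw⟩)), hG⟩
    · have hq' : q.2 ∈ sndOfFiber D ι (ι v) :=
        mem_image_of_mem _ (mem_filter.2 ⟨hq, by rw [hv']⟩)
      exact absurd ((mem_filter.1 (not_not.1 hv)).2 q.2 hq') (not_not.2 hH)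
  calc totdomnum G ≤ #(Dw ∪ Tw) := totdomnum_le_card hdom
    _ ≤ #Dw + #Tw := card_union_le _ _
    _ ≤ _ := Nat.add_le_add_right card_image_le _

lemma sum_card_undominated_sndOfFiber_le {D : Finset (V × W)}
    (hD : (G □ H).IsTotalDominating D) {T : Finset V} (hT : #T = totdomnum G) {ι : V → V}
    (hιT : ∀ v, ι v ∈ T) (hι : ∀ v, G.Adj (ι v) v) :
    ∑ a ∈ T, #(H.undominated (sndOfFiber D ι a)) ≤ #D := by
  have hcount (w : W) :
      #(T.filter fun a => w ∈ H.undominated (sndOfFiber D ι a)) ≤ #(D.filter fun p => p.2 = w) := by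
    have := totdomnum_le_card_layer_add_card_dominating hD hιT hι w
    have := card_filter_add_card_filter_not (s := T)
      (fun a => w ∈ H.undominated (sndOfFiber D ι a))
    omega
  calc ∑ a ∈ T, #(H.undominated (sndOfFiber D ι a))
      = ∑ w, #(T.filter fun a => w ∈ H.undominated (sndOfFiber D ι a)) := by
        simpa [bipartiteAbove, bipartiteBelow, undominated] using
          sum_card_bipartiteAbove_eq_sum_card_bipartiteBelow (s := T) (t := univ)
            (fun a w => w ∈ H.undominated (sndOfFiber D ι a))
    _ ≤ ∑ w, #(D.filter fun p => p.2 = w) := sum_le_sum fun w _ => hcount w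
    _ = #D := (card_eq_sum_card_fiberwise fun p _ => mem_univ p.2).symm

theorem totdomnum_mul_totdomnum_le (hG : ∀ v, ∃ u, G.Adj v u) (hH : ∀ w, ∃ u, H.Adj w u) :
    totdomnum G * totdomnum H ≤ 2 * totdomnum (G □ H) := by
  obtain ⟨D, hD, hDcard⟩ :=
    exists_isTotalDominating_card_eq_totdomnum (exists_boxProd_adj H hG)
  obtain ⟨T, hT, hTcard⟩ := exists_isTotalDominating_card_eq_totdomnum hG
  choose ι hιT hι using hT
  calc totdomnum G * totdomnum H = ∑ _a ∈ T, totdomnum H := by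
        rw [sum_const, smul_eq_mul, hTcard]
    _ ≤ ∑ a ∈ T, (#(sndOfFiber D ι a) + #(H.undominated (sndOfFiber D ι a))) :=
        sum_le_sum fun a _ => totdomnum_le_card_add_card_undominated hH _
    _ ≤ #D + #D := by
        rw [sum_add_distrib]
        exact add_le_add (sum_card_sndOfFiber_le D hιT)
          (sum_card_undominated_sndOfFiber_le hD hTcard hιT hι)
    _ = 2 * totdomnum (G □ H) := by rw [hDcard, two_mul]

end Ho

section Rainbow

variable {V : Type*} {G : SimpleGraph V} {k : ℕ}

lemma isKRTDF_iff_forall_subset_singleton (f : V → Finset (Fin k)) :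
    IsKRTDF G k f ↔ ∀ v i, f v ⊆ {i} → ∃ u, G.Adj v u ∧ i ∈ f u := by
  simp only [subset_singleton_iff, or_imp, forall_and, IsKRTDF, IsKRDF]
  exact and_congr (forall_congr' fun v => forall_comm) Iff.rfl

variable [Fintype V]

def labelGraph (f : V → Finset (Fin k)) : Finset (V × Fin k) :=
  univ.filter fun p => p.2 ∈ f p.1

lemma card_labelGraph (f : V → Finset (Fin k)) : #(labelGraph f) = ∑ v, #(f v) := by
  rw [labelGraph, card_filter, Fintype.sum_prod_type]
  simp only [← card_filter, filter_univ_mem]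

lemma exists_labelGraph_eq (D : Finset (V × Fin k)) : ∃ f, labelGraph f = D := by
  classical
  exact ⟨fun v => univ.filter fun i => (v, i) ∈ D, by ext; simp [labelGraph]⟩

/-- The label of `(v, i)` is dominated either from `(u, i)` with `u ~ v` or from some `(v, c)`
with `c ≠ i`; the latter fails exactly when `f v ⊆ {i}`. -/
lemma isKRTDF_iff_isTotalDominating_labelGraph (f : V → Finset (Fin k)) :
    IsKRTDF G k f ↔ (G □ (⊤ : SimpleGraph (Fin k))).IsTotalDominating (labelGraph f) := by
  rw [isKRTDF_iff_forall_subset_singleton, IsTotalDominating, Prod.forall]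
  refine forall_congr' fun v => forall_congr' fun i => ?_
  simp only [labelGraph, mem_filter, mem_univ, true_and, boxProd_adj, top_adj, Prod.exists]
  constructor
  · intro hf
    by_cases hsub : f v ⊆ {i}
    · obtain ⟨u, hvu, hu⟩ := hf hsub
      exact ⟨u, i, hu, Or.inl ⟨hvu.symm, rfl⟩⟩
    · obtain ⟨c, hc, hci⟩ := not_subset.1 hsub
      exact ⟨v, c, hc, Or.inr ⟨fun h => hci (mem_singleton.2 h), rfl⟩⟩
  · rintro ⟨u, c, hc, ⟨huv, rfl⟩ | ⟨hci, rfl⟩⟩ hsub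
    · exact ⟨u, huv.symm, hc⟩
    · exact absurd (mem_singleton.1 (hsub hc)) hci

lemma rtdnum_eq_totdomnum_boxProd_top (G : SimpleGraph V) (k : ℕ) :
    rtdnum G k = totdomnum (G □ (⊤ : SimpleGraph (Fin k))) := by
  unfold rtdnum totdomnum
  congr 1
  ext n
  constructor
  · rintro ⟨f, hf, rfl⟩
    exact ⟨labelGraph f, (isKRTDF_iff_isTotalDominating_labelGraph f).1 hf, card_labelGraph f⟩
  · rintro ⟨D, hD, rfl⟩
    obtain ⟨f, rfl⟩ := exists_labelGraph_eq D
    exact ⟨f, (isKRTDF_iff_isTotalDominating_labelGraph f).2 hD, (card_labelGraph f).symm⟩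

lemma rtdnum_le_mul_totdomnum (hG : ∀ v, ∃ u, G.Adj v u) (k : ℕ) :
    rtdnum G k ≤ k * totdomnum G := by
  obtain ⟨D, hD, hDcard⟩ := exists_isTotalDominating_card_eq_totdomnum hG
  calc rtdnum G k ≤ #(D ×ˢ (univ : Finset (Fin k))) := by
        rw [rtdnum_eq_totdomnum_boxProd_top]; exact totdomnum_le_card (hD.prod_univ _)
    _ = k * totdomnum G := by rw [card_product, card_univ, Fintype.card_fin, hDcard, mul_comm]

end Rainbow

theorem rtdnum_vizing_like_general {V W : Type*} [Fintype V] [Fintype W]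
    (G : SimpleGraph V) (H : SimpleGraph W) (k : ℕ)
    (hG : ∀ v : V, ∃ u, G.Adj v u) (hH : ∀ w : W, ∃ u, H.Adj w u) :
    rtdnum G k * rtdnum H k ≤ 2 * k * rtdnum (G.boxProd H) k := by
  have hHK : ∀ p, ∃ q, (H □ (⊤ : SimpleGraph (Fin k))).Adj p q := exists_boxProd_adj _ hH
  calc rtdnum G k * rtdnum H k
      ≤ k * totdomnum G * totdomnum (H □ (⊤ : SimpleGraph (Fin k))) := by
        rw [rtdnum_eq_totdomnum_boxProd_top H]; gcongr; exact rtdnum_le_mul_totdomnum hG k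
    _ ≤ k * (2 * totdomnum (G □ (H □ (⊤ : SimpleGraph (Fin k))))) := by
        rw [mul_assoc]; exact Nat.mul_le_mul_left k (totdomnum_mul_totdomnum_le hG hHK)
    _ = 2 * k * rtdnum (G □ H) k := by
        rw [rtdnum_eq_totdomnum_boxProd_top, totdomnum_congr (boxProdAssoc G H ⊤)]; ring

theorem rtdnum_vizing_like {V W : Type*} [Fintype V] [Fintype W]
    (G : SimpleGraph V) (H : SimpleGraph W) (k : ℕ) (hk : 2 ≤ k)
    (hG : ∀ v : V, ∃ u, G.Adj v u) (hH : ∀ w : W, ∃ u, H.Adj w u) :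
    rtdnum G k * rtdnum H k ≤ 2 * k * rtdnum (G.boxProd H) k :=
  rtdnum_vizing_like_general G H k hG hH
end
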